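/- Location of the sup-norm maximizers (Lemma B.2): Let γ* ∈ (0,1] and ζ* ∈ (0,1]. Define f̃(t) = (1/√(2π)) ∫_{−∞}^t [ (1 − ζ*/2) e^{−x²/2} + (ζ*/2) e^{−(x−2γ*)²/2} − (1−ζ*) e^{−x²/2} − ζ* e^{−(x−γ*)²/2} ] dx and f(t) = |f̃(t)|. Let t_+ = (3/2)γ* + (1/γ*) log(1 − √(1 − e^{−γ*²})) and t_− = (3/2)γ* + (1/γ*) log(1 + √(1 − e^{−γ*²})). Then the set of maximizers of f over ℝ is exactly {t_+, t_−}, with f̃(t_+) > 0 and f̃(t_−) < 0. -/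

import Mathlib

open MeasureTheory Set Filter

/-- The signed CDF difference `f̃` between the mixture `(1−ζ*/2)N(0,1) + (ζ*/2)N(2γ*,1)`
and the mixture `(1−ζ*)N(0,1) + ζ*N(γ*,1)`. -/
noncomputable def ftilde (ζs γs t : ℝ) : ℝ :=
  (1 / Real.sqrt (2 * Real.pi)) *
    ∫ x in Set.Iic t,
      ((1 - ζs / 2) * Real.exp (-(x ^ 2) / 2) +
        (ζs / 2) * Real.exp (-((x - 2 * γs) ^ 2) / 2) -
        (1 - ζs) * Real.exp (-(x ^ 2) / 2) -
        ζs * Real.exp (-((x - γs) ^ 2) / 2))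

noncomputable def supG (t : ℝ) : ℝ := ∫ x in Set.Iic t, Real.exp (-(x ^ 2) / 2)

lemma supf0_integrable : Integrable (fun x : ℝ => Real.exp (-(x ^ 2) / 2)) := by
  have h := integrable_exp_neg_mul_sq (b := (1 : ℝ) / 2) (by norm_num)
  have : (fun x : ℝ => Real.exp (-(x ^ 2) / 2)) = fun x => Real.exp (-((1:ℝ)/2) * x ^ 2) := by
    funext x; congr 1; ring
  rw [this]; exact h

lemma supf0_total : ∫ x : ℝ, Real.exp (-(x ^ 2) / 2) = Real.sqrt (2 * Real.pi) := by
  have h := integral_gaussian ((1 : ℝ) / 2)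
  have e : (fun x : ℝ => Real.exp (-((1:ℝ)/2) * x ^ 2)) = fun x => Real.exp (-(x ^ 2) / 2) := by
    funext x; congr 1; ring
  rw [e] at h
  rw [h]; congr 1; ring

lemma supG_shift (c t : ℝ) :
    ∫ x in Set.Iic t, Real.exp (-((x - c) ^ 2) / 2) = supG (t - c) := by
  rw [supG, ← integral_indicator measurableSet_Iic, ← integral_indicator measurableSet_Iic]
  have key : ((Set.Iic t).indicator fun x => Real.exp (-((x - c) ^ 2) / 2))
      = fun x => (Set.Iic (t - c)).indicator (fun y => Real.exp (-(y ^ 2) / 2)) (x - c) := by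
    funext x
    by_cases h : x ≤ t
    · rw [Set.indicator_of_mem (by simpa using h), Set.indicator_of_mem (by simp [h])]
    · rw [Set.indicator_of_notMem (by simpa using h), Set.indicator_of_notMem (by simp [h])]
  rw [key]
  exact integral_sub_right_eq_self _ c

lemma ftilde_eq (ζs γs t : ℝ) :
    ftilde ζs γs t = (1 / Real.sqrt (2 * Real.pi)) * (ζs / 2) *
      (supG t + supG (t - 2 * γs) - 2 * supG (t - γs)) := by
  have i0 : IntegrableOn (fun x : ℝ => Real.exp (-(x ^ 2) / 2)) (Set.Iic t) :=
    supf0_integrable.integrableOn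
  have i2 : IntegrableOn (fun x : ℝ => Real.exp (-((x - 2 * γs) ^ 2) / 2)) (Set.Iic t) :=
    (supf0_integrable.comp_sub_right (2 * γs)).integrableOn
  have i1 : IntegrableOn (fun x : ℝ => Real.exp (-((x - γs) ^ 2) / 2)) (Set.Iic t) :=
    (supf0_integrable.comp_sub_right γs).integrableOn
  rw [ftilde]
  have key : (∫ x in Set.Iic t,
      ((1 - ζs / 2) * Real.exp (-(x ^ 2) / 2) +
        (ζs / 2) * Real.exp (-((x - 2 * γs) ^ 2) / 2) -
        (1 - ζs) * Real.exp (-(x ^ 2) / 2) -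
        ζs * Real.exp (-((x - γs) ^ 2) / 2)))
      = (ζs / 2) * (supG t + supG (t - 2 * γs) - 2 * supG (t - γs)) := by
    have e : ∀ x : ℝ,
        ((1 - ζs / 2) * Real.exp (-(x ^ 2) / 2) +
          (ζs / 2) * Real.exp (-((x - 2 * γs) ^ 2) / 2) -
          (1 - ζs) * Real.exp (-(x ^ 2) / 2) -
          ζs * Real.exp (-((x - γs) ^ 2) / 2))
        = (ζs / 2) * (Real.exp (-(x ^ 2) / 2) + Real.exp (-((x - 2 * γs) ^ 2) / 2)
            - 2 * Real.exp (-((x - γs) ^ 2) / 2)) := by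
      intro x; ring
    rw [setIntegral_congr_fun measurableSet_Iic fun x _ => e x]
    rw [integral_const_mul]
    have i02 : IntegrableOn (fun x : ℝ => Real.exp (-(x ^ 2) / 2)
        + Real.exp (-((x - 2 * γs) ^ 2) / 2)) (Set.Iic t) := i0.add i2
    have i12 : IntegrableOn (fun x : ℝ => 2 * Real.exp (-((x - γs) ^ 2) / 2)) (Set.Iic t) :=
      i1.const_mul 2
    rw [integral_sub i02 i12, integral_add i0 i2, integral_const_mul]
    rw [supG_shift, supG_shift]
    rfl
  rw [key]; ring

lemma supG_hasDeriv (t : ℝ) : HasDerivAt supG (Real.exp (-(t ^ 2) / 2)) t := by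
  have hcont : Continuous fun x : ℝ => Real.exp (-(x ^ 2) / 2) := by continuity
  have h0 : supG = fun u => supG 0 + ∫ x in (0:ℝ)..u, Real.exp (-(x ^ 2) / 2) := by
    funext u
    have := intervalIntegral.integral_Iic_sub_Iic (μ := volume)
      (supf0_integrable.integrableOn (s := Set.Iic 0))
      (supf0_integrable.integrableOn (s := Set.Iic u))
    simp only [supG]
    linarith
  rw [h0]
  exact (intervalIntegral.integral_hasDerivAt_right
    supf0_integrable.intervalIntegrable
    (hcont.stronglyMeasurableAtFilter _ _) hcont.continuousAt).const_add (supG 0)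

lemma supG_tendsto_top : Tendsto supG atTop (nhds (Real.sqrt (2 * Real.pi))) := by
  rw [← supf0_total]
  have hrep : supG = fun t : ℝ =>
      ∫ x, (Set.Iic t).indicator (fun y => Real.exp (-(y ^ 2) / 2)) x := by
    funext t; rw [supG, integral_indicator measurableSet_Iic]
  rw [hrep]
  apply tendsto_integral_filter_of_dominated_convergence
    (fun x => Real.exp (-(x ^ 2) / 2))
  · exact Eventually.of_forall fun t =>
      supf0_integrable.aestronglyMeasurable.indicator measurableSet_Iic
  · refine Eventually.of_forall fun t => Eventually.of_forall fun x => ?_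
    rw [Real.norm_eq_abs, Set.indicator_apply]
    split
    · rw [abs_of_nonneg (Real.exp_pos _).le]
    · simpa using (Real.exp_pos _).le
  · exact supf0_integrable
  · refine Eventually.of_forall fun x => ?_
    refine Tendsto.congr' ?_ tendsto_const_nhds
    filter_upwards [eventually_ge_atTop x] with t ht
    rw [Set.indicator_of_mem (by simpa using ht)]

lemma supG_tendsto_bot : Tendsto supG atBot (nhds 0) := by
  have hrep : supG = fun t : ℝ =>
      ∫ x, (Set.Iic t).indicator (fun y => Real.exp (-(y ^ 2) / 2)) x := by
    funext t; rw [supG, integral_indicator measurableSet_Iic]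
  rw [hrep]
  have h0 : (0 : ℝ) = ∫ x : ℝ, (0 : ℝ) := by simp
  rw [h0]
  apply tendsto_integral_filter_of_dominated_convergence
    (fun x => Real.exp (-(x ^ 2) / 2))
  · exact Eventually.of_forall fun t =>
      supf0_integrable.aestronglyMeasurable.indicator measurableSet_Iic
  · refine Eventually.of_forall fun t => Eventually.of_forall fun x => ?_
    rw [Real.norm_eq_abs, Set.indicator_apply]
    split
    · rw [abs_of_nonneg (Real.exp_pos _).le]
    · simpa using (Real.exp_pos _).le
  · exact supf0_integrable
  · refine Eventually.of_forall fun x => ?_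
    refine Tendsto.congr' ?_ tendsto_const_nhds
    filter_upwards [eventually_lt_atBot x] with t ht
    rw [Set.indicator_of_notMem (by simpa using not_le.mpr ht)]

lemma supG_reflect (t : ℝ) : supG (-t) = Real.sqrt (2 * Real.pi) - supG t := by
  have heven : ∀ x : ℝ, Real.exp (-((-x) ^ 2) / 2) = Real.exp (-(x ^ 2) / 2) := by
    intro x; congr 1; ring
  have h1 : supG (-t) = ∫ x in Set.Ioi t, Real.exp (-(x ^ 2) / 2) := by
    rw [supG]
    have : ∀ x ∈ Set.Iic (-t), Real.exp (-(x ^ 2) / 2)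
        = Real.exp (-((-x) ^ 2) / 2) := fun x _ => (heven x).symm
    rw [setIntegral_congr_fun measurableSet_Iic this,
      integral_comp_neg_Iic (-t) (fun y => Real.exp (-(y ^ 2) / 2)), neg_neg]
  have h2 := intervalIntegral.integral_Iic_add_Ioi (μ := volume) (b := t)
    (supf0_integrable.integrableOn) (supf0_integrable.integrableOn)
  rw [supf0_total] at h2
  rw [h1, supG]; linarith

noncomputable def supH (γ t : ℝ) : ℝ := supG t + supG (t - 2 * γ) - 2 * supG (t - γ)

noncomputable def supD (γ t : ℝ) : ℝ :=
  Real.exp (-(t ^ 2) / 2) + Real.exp (-((t - 2 * γ) ^ 2) / 2)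
    - 2 * Real.exp (-((t - γ) ^ 2) / 2)

lemma supH_hasDeriv (γ t : ℝ) : HasDerivAt (supH γ) (supD γ t) t := by
  have h2 : HasDerivAt (fun u : ℝ => supG (u - 2 * γ))
      (Real.exp (-((t - 2 * γ) ^ 2) / 2)) t := by
    simpa [Function.comp_def] using (supG_hasDeriv (t - 2 * γ)).comp t ((hasDerivAt_id t).sub_const (2 * γ))
  have h3 : HasDerivAt (fun u : ℝ => supG (u - γ)) (Real.exp (-((t - γ) ^ 2) / 2)) t := by
    simpa [Function.comp_def] using (supG_hasDeriv (t - γ)).comp t ((hasDerivAt_id t).sub_const γ)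
  have := ((supG_hasDeriv t).add h2).sub (h3.const_mul 2)
  exact this

lemma supH_tendsto_bot (γ : ℝ) : Tendsto (supH γ) atBot (nhds 0) := by
  have l2 : Tendsto (fun t : ℝ => t - 2 * γ) atBot atBot :=
    tendsto_atBot_add_const_right _ (-(2 * γ)) tendsto_id |>.congr (by intro x; simp only [id_eq]; ring)
  have l3 : Tendsto (fun t : ℝ => t - γ) atBot atBot :=
    tendsto_atBot_add_const_right _ (-γ) tendsto_id |>.congr (by intro x; simp only [id_eq]; ring)
  have := ((supG_tendsto_bot.add (supG_tendsto_bot.comp l2)).sub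
    ((supG_tendsto_bot.comp l3).const_mul 2))
  unfold supH
  simpa [Function.comp] using this

lemma supH_sum_tendsto_top (γ : ℝ) : Tendsto (supH γ) atTop (nhds 0) := by
  have l2 : Tendsto (fun t : ℝ => t - 2 * γ) atTop atTop :=
    tendsto_atTop_add_const_right _ (-(2 * γ)) tendsto_id |>.congr (by intro x; simp only [id_eq]; ring)
  have l3 : Tendsto (fun t : ℝ => t - γ) atTop atTop :=
    tendsto_atTop_add_const_right _ (-γ) tendsto_id |>.congr (by intro x; simp only [id_eq]; ring)
  have h := ((supG_tendsto_top.add (supG_tendsto_top.comp l2)).sub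
    ((supG_tendsto_top.comp l3).const_mul 2))
  have e : Real.sqrt (2 * Real.pi) + Real.sqrt (2 * Real.pi)
      - 2 * Real.sqrt (2 * Real.pi) = 0 := by ring
  rw [e] at h
  unfold supH
  simpa [Function.comp] using h

lemma supH_symm (γ s : ℝ) : supH γ (γ + s) = -supH γ (γ - s) := by
  simp only [supH]
  have r1 := supG_reflect (s - γ)
  have r2 := supG_reflect (γ + s)
  have r3 := supG_reflect s
  have e1 : γ - s = -(s - γ) := by ring
  have e2 : γ - s - 2 * γ = -(γ + s) := by ring
  have e3 : γ - s - γ = -s := by ring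
  have e4 : γ + s - 2 * γ = s - γ := by ring
  have e5 : γ + s - γ = s := by ring
  rw [e4, e5, e2, e3, e1, r1, r2, r3]
  ring

lemma quadalg (B C q E A : ℝ) (hq : q ≠ 0) (hE : E ^ 2 * (1 - A ^ 2) = 1) :
    B * C * q⁻¹ + B * C * q - 2 * (B * C * E)
      = (B * C * q⁻¹) * ((q - E * (1 - A)) * (q - E * (1 + A))) := by
  field_simp
  linear_combination (-(B * C)) * hE

set_option maxHeartbeats 2000000 in
lemma supH_main (γ a tp tm : ℝ) (hγ : 0 < γ)
    (ha : a = Real.sqrt (1 - Real.exp (-(γ ^ 2))))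
    (htp : tp = 3 / 2 * γ + 1 / γ * Real.log (1 - a))
    (htm : tm = 3 / 2 * γ + 1 / γ * Real.log (1 + a)) :
    0 < supH γ tp ∧ supH γ tm = -supH γ tp ∧
      (∀ t, |supH γ t| ≤ supH γ tp) ∧
      ∀ t, t ≠ tp → t ≠ tm → |supH γ t| < supH γ tp := by
  have hγ2 : (0 : ℝ) < γ ^ 2 := by positivity
  have hexp1 : Real.exp (-(γ ^ 2)) < 1 := by
    rw [show (1 : ℝ) = Real.exp 0 from (Real.exp_zero).symm]
    exact Real.exp_lt_exp.mpr (by linarith)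
  have hexp0 : 0 < Real.exp (-(γ ^ 2)) := Real.exp_pos _
  have ha2 : a ^ 2 = 1 - Real.exp (-(γ ^ 2)) := by
    rw [ha]; exact Real.sq_sqrt (by linarith)
  have ha0 : 0 < a := by rw [ha]; exact Real.sqrt_pos.mpr (by linarith)
  have ha1 : a < 1 := by nlinarith
  -- key exponential values
  have hargp : γ * (tp - γ) = γ ^ 2 / 2 + Real.log (1 - a) := by
    rw [htp]; field_simp; ring
  have hargm : γ * (tm - γ) = γ ^ 2 / 2 + Real.log (1 + a) := by
    rw [htm]; field_simp; ring
  have hqp : Real.exp (γ * (tp - γ)) = Real.exp (γ ^ 2 / 2) * (1 - a) := by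
    rw [hargp, Real.exp_add, Real.exp_log (by linarith)]
  have hqm : Real.exp (γ * (tm - γ)) = Real.exp (γ ^ 2 / 2) * (1 + a) := by
    rw [hargm, Real.exp_add, Real.exp_log (by linarith)]
  have htptm : tp < tm := by
    rw [htp, htm]
    have hlog : Real.log (1 - a) < Real.log (1 + a) :=
      Real.log_lt_log (by linarith) (by linarith)
    have h1γ : 0 < 1 / γ := by positivity
    nlinarith
  have hsum : tp + tm = 2 * γ := by
    have hlogsum : Real.log (1 - a) + Real.log (1 + a) = -(γ ^ 2) := by
      rw [← Real.log_mul (by linarith) (by linarith)]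
      have : (1 - a) * (1 + a) = Real.exp (-(γ ^ 2)) := by nlinarith
      rw [this, Real.log_exp]
    have e : tp + tm = 3 * γ + 1 / γ * (Real.log (1 - a) + Real.log (1 + a)) := by
      rw [htp, htm]; ring
    rw [e, hlogsum]; field_simp; ring
  -- factorization of the derivative
  have hEa : (Real.exp (γ ^ 2 / 2)) ^ 2 * (1 - a ^ 2) = 1 := by
    have h1 : (1 : ℝ) - a ^ 2 = Real.exp (-(γ ^ 2)) := by rw [ha2]; ring
    rw [h1, sq, ← Real.exp_add, ← Real.exp_add,
      show γ ^ 2 / 2 + γ ^ 2 / 2 + -(γ ^ 2) = 0 by ring, Real.exp_zero]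
  have hfact : ∀ t, supD γ t =
      (Real.exp (-((t - γ) ^ 2) / 2) * Real.exp (-(γ ^ 2) / 2)
        * (Real.exp (γ * (t - γ)))⁻¹) *
      ((Real.exp (γ * (t - γ)) - Real.exp (γ ^ 2 / 2) * (1 - a)) *
        (Real.exp (γ * (t - γ)) - Real.exp (γ ^ 2 / 2) * (1 + a))) := by
    intro t
    have hq : Real.exp (γ * (t - γ)) ≠ 0 := (Real.exp_pos _).ne'
    have e1 : Real.exp (-(t ^ 2) / 2) = Real.exp (-((t - γ) ^ 2) / 2)
        * Real.exp (-(γ ^ 2) / 2) * (Real.exp (γ * (t - γ)))⁻¹ := by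
      rw [← Real.exp_neg, ← Real.exp_add, ← Real.exp_add]; congr 1; ring
    have e2 : Real.exp (-((t - 2 * γ) ^ 2) / 2) = Real.exp (-((t - γ) ^ 2) / 2)
        * Real.exp (-(γ ^ 2) / 2) * Real.exp (γ * (t - γ)) := by
      rw [← Real.exp_add, ← Real.exp_add]; congr 1; ring
    have e3 : Real.exp (-((t - γ) ^ 2) / 2) = Real.exp (-((t - γ) ^ 2) / 2)
        * Real.exp (-(γ ^ 2) / 2) * Real.exp (γ ^ 2 / 2) := by
      rw [mul_assoc, ← Real.exp_add, show -(γ ^ 2) / 2 + γ ^ 2 / 2 = 0 by ring,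
        Real.exp_zero, mul_one]
    have expand : supD γ t = Real.exp (-((t - γ) ^ 2) / 2) * Real.exp (-(γ ^ 2) / 2)
        * (Real.exp (γ * (t - γ)))⁻¹
        + Real.exp (-((t - γ) ^ 2) / 2) * Real.exp (-(γ ^ 2) / 2) * Real.exp (γ * (t - γ))
        - 2 * (Real.exp (-((t - γ) ^ 2) / 2) * Real.exp (-(γ ^ 2) / 2)
            * Real.exp (γ ^ 2 / 2)) := by
      rw [supD]; linear_combination e1 + e2 - 2 * e3
    rw [expand, quadalg _ _ _ _ _ hq hEa]
  -- sign of the derivative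
  have hqmono : ∀ {s u : ℝ}, s < u → Real.exp (γ * (s - γ)) < Real.exp (γ * (u - γ)) := by
    intro s u h
    exact Real.exp_lt_exp.mpr (by nlinarith)
  have hEpos := Real.exp_pos (γ ^ 2 / 2)
  have hElt : Real.exp (γ ^ 2 / 2) * (1 - a) < Real.exp (γ ^ 2 / 2) * (1 + a) := by nlinarith
  have hDpos1 : ∀ t, t < tp → 0 < supD γ t := by
    intro t ht
    rw [hfact t]
    have h1 : Real.exp (γ * (t - γ)) < Real.exp (γ ^ 2 / 2) * (1 - a) := by
      rw [← hqp]; exact hqmono ht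
    have h2 : Real.exp (γ * (t - γ)) < Real.exp (γ ^ 2 / 2) * (1 + a) := by linarith
    have hA : 0 < Real.exp (-((t - γ) ^ 2) / 2) * Real.exp (-(γ ^ 2) / 2)
        * (Real.exp (γ * (t - γ)))⁻¹ := by positivity
    exact mul_pos hA (mul_pos_of_neg_of_neg (by linarith) (by linarith))
  have hDpos2 : ∀ t, tm < t → 0 < supD γ t := by
    intro t ht
    rw [hfact t]
    have h2 : Real.exp (γ ^ 2 / 2) * (1 + a) < Real.exp (γ * (t - γ)) := by
      rw [← hqm]; exact hqmono ht
    have h1 : Real.exp (γ ^ 2 / 2) * (1 - a) < Real.exp (γ * (t - γ)) := by linarith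
    have hA : 0 < Real.exp (-((t - γ) ^ 2) / 2) * Real.exp (-(γ ^ 2) / 2)
        * (Real.exp (γ * (t - γ)))⁻¹ := by positivity
    exact mul_pos hA (mul_pos (by linarith) (by linarith))
  have hDneg : ∀ t, tp < t → t < tm → supD γ t < 0 := by
    intro t ht1 ht2
    rw [hfact t]
    have h1 : Real.exp (γ ^ 2 / 2) * (1 - a) < Real.exp (γ * (t - γ)) := by
      rw [← hqp]; exact hqmono ht1
    have h2 : Real.exp (γ * (t - γ)) < Real.exp (γ ^ 2 / 2) * (1 + a) := by
      rw [← hqm]; exact hqmono ht2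
    have hA : 0 < Real.exp (-((t - γ) ^ 2) / 2) * Real.exp (-(γ ^ 2) / 2)
        * (Real.exp (γ * (t - γ)))⁻¹ := by positivity
    exact mul_neg_of_pos_of_neg hA (mul_neg_of_pos_of_neg (by linarith) (by linarith))
  -- monotonicity of supH
  have hdiff : Differentiable ℝ (supH γ) := fun t => (supH_hasDeriv γ t).differentiableAt
  have hcont := hdiff.continuous
  have hderiv : ∀ t, deriv (supH γ) t = supD γ t := fun t => (supH_hasDeriv γ t).deriv
  have hmono1 : StrictMonoOn (supH γ) (Set.Iic tp) := by
    apply strictMonoOn_of_deriv_pos (convex_Iic tp) hcont.continuousOn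
    intro x hx
    rw [interior_Iic] at hx
    rw [hderiv]
    exact hDpos1 x hx
  have hanti : StrictAntiOn (supH γ) (Set.Icc tp tm) := by
    apply strictAntiOn_of_deriv_neg (convex_Icc tp tm) hcont.continuousOn
    intro x hx
    rw [interior_Icc] at hx
    rw [hderiv]
    exact hDneg x hx.1 hx.2
  have hmono2 : StrictMonoOn (supH γ) (Set.Ici tm) := by
    apply strictMonoOn_of_deriv_pos (convex_Ici tm) hcont.continuousOn
    intro x hx
    rw [interior_Ici] at hx
    rw [hderiv]
    exact hDpos2 x hx
  -- positivity of the maximum, symmetry values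
  have hnonneg : ∀ t, t ≤ tp → 0 ≤ supH γ t := by
    intro t ht
    refine le_of_tendsto (supH_tendsto_bot γ) ?_
    filter_upwards [eventually_le_atBot t] with u hu
    exact hmono1.monotoneOn (Set.mem_Iic.mpr (hu.trans ht)) (Set.mem_Iic.mpr ht) hu
  have hM0 : 0 < supH γ tp := by
    have h1 : 0 ≤ supH γ (tp - 1) := hnonneg _ (by linarith)
    have h2 : supH γ (tp - 1) < supH γ tp :=
      hmono1 (Set.mem_Iic.mpr (by linarith)) (Set.mem_Iic.mpr le_rfl) (by linarith)
    linarith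
  have hHtm : supH γ tm = -supH γ tp := by
    have h := supH_symm γ (tm - γ)
    have e : γ + (tm - γ) = tm := by ring
    have e' : γ - (tm - γ) = tp := by linarith
    rw [e, e'] at h
    exact h
  have hnonpos : ∀ t, tm ≤ t → supH γ t ≤ 0 := by
    intro t ht
    have h := supH_symm γ (t - γ)
    have e : γ + (t - γ) = t := by ring
    have e' : γ - (t - γ) = 2 * γ - t := by ring
    rw [e, e'] at h
    have h0 : 0 ≤ supH γ (2 * γ - t) := hnonneg _ (by linarith)
    linarith
  refine ⟨hM0, hHtm, ?_, ?_⟩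
  · intro t
    rw [abs_le]
    rcases le_or_gt t tp with h | h
    · exact ⟨by linarith [hnonneg t h],
        hmono1.monotoneOn (Set.mem_Iic.mpr h) (Set.mem_Iic.mpr le_rfl) h⟩
    rcases le_or_gt t tm with h' | h'
    · constructor
      · have := hanti.antitoneOn (Set.mem_Icc.mpr ⟨h.le, h'⟩)
          (Set.mem_Icc.mpr ⟨htptm.le, le_rfl⟩) h'
        linarith [hHtm]
      · exact hanti.antitoneOn (Set.mem_Icc.mpr ⟨le_rfl, htptm.le⟩)
          (Set.mem_Icc.mpr ⟨h.le, h'⟩) h.le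
    · constructor
      · have := hmono2.monotoneOn (Set.mem_Ici.mpr le_rfl) (Set.mem_Ici.mpr h'.le) h'.le
        linarith [hHtm]
      · linarith [hnonpos t h'.le]
  · intro t h1 h2
    rw [abs_lt]
    rcases lt_trichotomy t tp with h | h | h
    · exact ⟨by linarith [hnonneg t h.le],
        hmono1 (Set.mem_Iic.mpr h.le) (Set.mem_Iic.mpr le_rfl) h⟩
    · exact absurd h h1
    rcases lt_trichotomy t tm with h' | h' | h'
    · constructor
      · have := hanti (Set.mem_Icc.mpr ⟨h.le, h'.le⟩)
          (Set.mem_Icc.mpr ⟨htptm.le, le_rfl⟩) h'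
        linarith [hHtm]
      · exact hanti (Set.mem_Icc.mpr ⟨le_rfl, htptm.le⟩)
          (Set.mem_Icc.mpr ⟨h.le, h'.le⟩) h
    · exact absurd h' h2
    · constructor
      · have := hmono2 (Set.mem_Ici.mpr le_rfl) (Set.mem_Ici.mpr h'.le) h'
        linarith [hHtm]
      · linarith [hnonpos t h'.le]

/-- Location of the sup-norm maximizers (Lemma B.2): the set of maximizers of
`f = |f̃|` is exactly `{t_+, t_−}`, with `f̃(t_+) > 0` and `f̃(t_−) < 0`. -/
theorem supnorm_maximizers (ζs γs : ℝ) (hζ : ζs ∈ Set.Ioc (0 : ℝ) 1)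
    (hγ : γs ∈ Set.Ioc (0 : ℝ) 1) :
    {t : ℝ | ∀ s : ℝ, |ftilde ζs γs s| ≤ |ftilde ζs γs t|} =
        ({3 / 2 * γs + 1 / γs * Real.log (1 - Real.sqrt (1 - Real.exp (-(γs ^ 2)))),
          3 / 2 * γs + 1 / γs * Real.log (1 + Real.sqrt (1 - Real.exp (-(γs ^ 2))))} :
          Set ℝ) ∧
      0 < ftilde ζs γs
          (3 / 2 * γs + 1 / γs * Real.log (1 - Real.sqrt (1 - Real.exp (-(γs ^ 2))))) ∧
      ftilde ζs γs
          (3 / 2 * γs + 1 / γs * Real.log (1 + Real.sqrt (1 - Real.exp (-(γs ^ 2))))) < 0 := by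
  obtain ⟨hζ0, hζ1⟩ := hζ
  obtain ⟨hγ0, hγ1⟩ := hγ
  set tp := 3 / 2 * γs + 1 / γs * Real.log (1 - Real.sqrt (1 - Real.exp (-(γs ^ 2)))) with htpdef
  set tm := 3 / 2 * γs + 1 / γs * Real.log (1 + Real.sqrt (1 - Real.exp (-(γs ^ 2)))) with htmdef
  obtain ⟨hM0, hHtm, hle, hlt⟩ := supH_main γs _ tp tm hγ0 rfl htpdef htmdef
  have hsqrt : 0 < Real.sqrt (2 * Real.pi) := Real.sqrt_pos.mpr (by positivity)
  set k := (1 / Real.sqrt (2 * Real.pi)) * (ζs / 2) with hkdef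
  have hk : 0 < k := by rw [hkdef]; positivity
  have hf : ∀ t, ftilde ζs γs t = k * supH γs t := by
    intro t
    rw [ftilde_eq, hkdef, supH]
  have hk' : 0 < |k| := abs_pos.mpr hk.ne'
  have hcomp : ∀ x y : ℝ, |k * x| ≤ |k * y| ↔ |x| ≤ |y| := by
    intro x y
    rw [abs_mul k x, abs_mul k y]
    exact mul_le_mul_iff_right₀ hk'
  refine ⟨?_, ?_, ?_⟩
  · ext t
    simp only [Set.mem_setOf_eq, Set.mem_insert_iff, Set.mem_singleton_iff]
    constructor
    · intro h
      by_contra hc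
      push_neg at hc
      obtain ⟨h1, h2⟩ := hc
      have hlt' := hlt t h1 h2
      have h' := h tp
      rw [hf, hf] at h'
      have habs : |supH γs tp| ≤ |supH γs t| := (hcomp _ _).mp h'
      rw [abs_of_pos hM0] at habs
      linarith
    · intro h s
      rcases h with h | h
      · subst h
        rw [hf, hf]
        rw [hcomp]
        rw [abs_of_pos hM0]
        exact hle s
      · subst h
        rw [hf, hf]
        rw [hcomp]
        rw [hHtm, abs_neg, abs_of_pos hM0]
        exact hle s
  · rw [hf]
    exact mul_pos hk hM0
  · rw [hf, hHtm]
    exact mul_neg_of_pos_of_neg hk (by linarith)
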